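/- arXiv:2401.12814 — 2 statements merged into one kernel-verified Lean document; each statement's English description precedes it below -/
import Mathlib

section
/- Let A be a commutative ring and ℓ ≥ 0 an integer. For all elements u_1,…,u_ℓ, w_1,…,w_ℓ ∈ A one has the identity ∏_{k=1}^{ℓ} (u_k + w_k) = Σ_{J ⊆ [ℓ]} ∏_{i ∈ [ℓ]∖J} (u_i + |J ∩ [i]|) · ∏_{j ∈ J} (w_j − |J ∩ [j−1]|), where the cardinalities of the finite sets are interpreted in A via the canonical map ℕ → A. (This is Lemma 4.7 of the paper, an identity between polynomials in u_1,…,u_ℓ, w_1,…,w_ℓ.) -/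
/-!
Induct on the index set, adding a new maximum `a`. For a subset `J` of the old indices, `a` either
goes to the complement, where it sees all of `J` and contributes `u a + |J|`, or joins `J`, where all
of `J` lies below it and it contributes `w a - |J|`; the old factors do not see `a` at all. The two
contributions add up to `u a + w a`.
-/

open Finset

/-- The identity over any finite linearly ordered index set: `J ∩ [i]` becomes `{j ∈ J | j ≤ i}`
and `J ∩ [j - 1]` becomes `{j' ∈ J | j' < j}`. -/
theorem Finset.prod_add_eq_sum_powerset_shifted {α A : Type*} [LinearOrder α] [CommRing A]
    (s : Finset α) (u w : α → A) :
    ∏ k ∈ s, (u k + w k) =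
      ∑ J ∈ s.powerset,
        (∏ i ∈ s \ J, (u i + (#{j ∈ J | j ≤ i} : A))) *
          ∏ j ∈ J, (w j - (#{j' ∈ J | j' < j} : A)) := by
  induction s using Finset.induction_on_max with
  | empty => simp
  | insert a s ha_max ih =>
    have ha : a ∉ s := fun h => (ha_max a h).false
    rw [prod_insert ha, sum_powerset_insert ha, ih, mul_sum, ← sum_add_distrib]
    refine sum_congr rfl fun J hJ => ?_
    have hJs : J ⊆ s := mem_powerset.mp hJ
    have haJ : a ∉ J := fun h => ha (hJs h)
    have hlt : ∀ x ∈ J, x < a := fun x hx => ha_max x (hJs hx)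
    have hsdiff_lt : ∀ i ∈ s \ J, i < a := fun i hi => ha_max i (mem_sdiff.mp hi).1
    have hle_a : #{j ∈ J | j ≤ a} = #J := by
      rw [filter_true_of_mem fun x hx => (hlt x hx).le]
    have hlt_a : #{j ∈ insert a J | j < a} = #J := by
      rw [filter_insert, if_neg (lt_irrefl a), filter_true_of_mem hlt]
    have hle_i : ∏ i ∈ s \ J, (u i + (#{j ∈ insert a J | j ≤ i} : A)) =
        ∏ i ∈ s \ J, (u i + (#{j ∈ J | j ≤ i} : A)) :=
      prod_congr rfl fun i hi => by rw [filter_insert, if_neg (hsdiff_lt i hi).not_ge]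
    have hlt_j : ∏ j ∈ J, (w j - (#{j' ∈ insert a J | j' < j} : A)) =
        ∏ j ∈ J, (w j - (#{j' ∈ J | j' < j} : A)) :=
      prod_congr rfl fun j hj => by rw [filter_insert, if_neg (hlt j hj).not_gt]
    rw [insert_sdiff_of_notMem _ haJ, prod_insert fun h => ha (mem_sdiff.mp h).1, hle_a,
      insert_sdiff_insert, sdiff_insert_of_notMem ha, prod_insert haJ, hlt_a, hle_i, hlt_j]
    ring

/-- **Lemma 4.7** of the paper: for a commutative ring `A`, `ℓ ≥ 0`, and elements
`u_1, …, u_ℓ, w_1, …, w_ℓ ∈ A`, one has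
`∏_{k=1}^{ℓ} (u_k + w_k)
  = Σ_{J ⊆ [ℓ]} ∏_{i ∈ [ℓ]∖J} (u_i + |J ∩ [i]|) · ∏_{j ∈ J} (w_j − |J ∩ [j−1]|)`,
where `[ℓ] = {1,…,ℓ}` and cardinalities are interpreted in `A` via `ℕ → A`. -/
theorem stmt0 (A : Type*) [CommRing A] (ℓ : ℕ) (u w : ℕ → A) :
    ∏ k ∈ Finset.Icc 1 ℓ, (u k + w k) =
      ∑ J ∈ (Finset.Icc 1 ℓ).powerset,
        (∏ i ∈ (Finset.Icc 1 ℓ) \ J, (u i + ((J ∩ Finset.Icc 1 i).card : A))) *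
          (∏ j ∈ J, (w j - ((J ∩ Finset.Icc 1 (j - 1)).card : A))) := by
  rw [prod_add_eq_sum_powerset_shifted]
  refine sum_congr rfl fun J hJ => ?_
  have hpos : ∀ x ∈ J, 1 ≤ x := fun x hx => (mem_Icc.mp (mem_powerset.mp hJ hx)).1
  have hle : ∀ i, J ∩ Icc 1 i = {j ∈ J | j ≤ i} := fun i => by
    ext x; simp only [mem_inter, mem_Icc, mem_filter]
    exact ⟨fun h => ⟨h.1, h.2.2⟩, fun h => ⟨h.1, hpos x h.1, h.2⟩⟩
  have hlt : ∀ j, J ∩ Icc 1 (j - 1) = {j' ∈ J | j' < j} := fun j => by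
    rw [hle]; exact filter_congr fun x hx => by have := hpos x hx; omega
  -- `hle` also matches the ranges `Icc 1 (j - 1)`, so `hlt` has to go first.
  simp only [hlt]
  simp only [hle]
end

section
/- Let n ≥ 0 be an integer and let R = ℚ[ℏ,𝔟,P_1,…,P_n]. Then the following identity of R-linear operators on R[p̃] holds, where every sum over a bridge set is locally finite (for each polynomial input only finitely many summands act nonzero): Σ_{i=0}^{n} e_{n−i}(P_1,…,P_n) · Σ_{γ ∈ Γ^{≥0}_{(0,−1)→(i+1,0)}} wt̃(γ|0) = Σ_{γ ∈ Γ^{≥0}_{(0,−1)→(n+1,0)}} wt̃(γ|(0,P_1,…,P_n)), where (0,P_1,…,P_n) is the vector of length n+1 whose first entry is 0. -/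
open MvPolynomial

noncomputable section Stmt1

/-- The coefficient ring `R = ℚ[ℏ, 𝔟, P_1, …, P_n]`. -/
abbrev RR (n : ℕ) : Type := MvPolynomial (Fin (n + 2)) ℚ

/-- The ring `R[p̃] = R[p̃_1, p̃_2, …]` (variable `k` stands for `p̃_k`; index `0` is unused). -/
abbrev PP (n : ℕ) : Type := MvPolynomial ℕ (RR n)

/-- The indeterminate `ℏ`. -/
def hb (n : ℕ) : RR n := X 0

/-- The indeterminate `𝔟`. -/
def bb (n : ℕ) : RR n := X 1

/-- The indeterminates `P_1, …, P_n` (zero-indexed). -/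
def Pv (n : ℕ) (i : Fin n) : RR n := X i.succ.succ

/-- The operators `J_k` on `R[p̃]`: `J_k = ℏ k ∂_{p̃_k}` for `k > 0`, `J_0 = 0`,
and `J_{-k} = ℏ·p̃_k` (multiplication) for `k > 0`. -/
def J (n : ℕ) (k : ℤ) : PP n → PP n :=
  if 0 < k then fun p => C (hb n) * (k.toNat : PP n) * pderiv k.toNat p
  else if k < 0 then fun p => C (hb n) * X (-k).toNat * p
  else 0

/-- The set of paths from `(x, y)` to `(x + N, y')`, encoded as the list of the `N`
successive height increments. -/
def PathSet (y : ℤ) (N : ℕ) (y' : ℤ) : Set (List ℤ) :=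
  {L | L.length = N ∧ y + L.sum = y'}

/-- The set of bridges from `(x, y)` to `(x + N, y')`: paths whose intermediate heights
`h_1, …, h_{N-1}` are all nonnegative. -/
def BridgeSet (y : ℤ) (N : ℤ) (y' : ℤ) : Set (List ℤ) :=
  {L | L ∈ PathSet y N.toNat y' ∧ ∀ j : ℕ, 0 < j → (j : ℤ) < N → 0 ≤ y + (L.take j).sum}

/-- The weight `wt̃(γ|u)` of a path: processed from the left, at (1-based) position `u`
and current height `y`, a non-flat step of increment `d` contributes the operator
`J_{-d}` (i.e. `J_{h_{j-1} - h_j}`), while a flat step contributes scalar multiplication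
by `u_j − ℏ𝔟·h_j`. The first step's operator is applied last. -/
def wtT (n : ℕ) (uvec : ℕ → RR n) : ℕ → ℤ → List ℤ → PP n → PP n
  | _, _, [] => id
  | u, y, d :: rest =>
      (if d = 0 then (fun p => C (uvec u - hb n * bb n * (y : RR n)) * p) else J n (-d)) ∘
        wtT n uvec (u + 1) (y + d) rest

/-- The elementary symmetric polynomial `e_s(P_1, …, P_n)`. -/
def esymP (n s : ℕ) : RR n :=
  ∑ t ∈ Finset.powersetCard s (Finset.univ : Finset (Fin n)), ∏ j ∈ t, Pv n j

/-- The weight vector `(0, P_1, …, P_n)` (of length `n + 1`), as a function of the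
1-based position. -/
def uvP (n : ℕ) : ℕ → RR n := fun u =>
  if h : 2 ≤ u ∧ u ≤ n + 1 then Pv n ⟨u - 2, by omega⟩ else 0

/-!
Expanding each flat-step factor `u_j - ℏ𝔟h` as `u_j + (-ℏ𝔟h)` and deleting the flat steps at which
`u_j` was chosen turns a path weighted by `u` into a shorter path weighted by `0`, and the chosen
positions contribute the elementary symmetric polynomials of the `u_j`. Formally this is an
induction on the length: peeling off the first step, a flat first step contributes the extra
term `u_j`, which is Pascal's rule `e_{k+1}(a, s) = e_{k+1}(s) + a e_k(s)`.

Local finiteness comes from the grading in which `p̃_k` has weight `k`: a step of increment `d`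
raises the weighted degree by at most `d` (a step down by `k` is `ℏk∂_{p̃_k}`), so along a path with
nonzero weight every height is at most the weighted degree of `p`. A bridge from height `-1` to
`0` therefore has all its steps in a finite range depending on `p` alone.
-/

local notation "wdeg" => weightedTotalDegree (id : ℕ → ℕ)

namespace MvPolynomial

variable {σ R : Type*} [CommSemiring R] (w : σ → ℕ)

theorem weightedTotalDegree_smul_le (c : R) (q : MvPolynomial σ R) :
    weightedTotalDegree w (c • q) ≤ weightedTotalDegree w q :=
  Finset.sup_mono support_smul

theorem weightedTotalDegree_X_mul_le (i : σ) (q : MvPolynomial σ R) :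
    weightedTotalDegree w (X i * q) ≤ w i + weightedTotalDegree w q := by
  refine Finset.sup_le fun m hm => ?_
  rw [support_X_mul] at hm
  obtain ⟨m', hm', rfl⟩ := Finset.mem_map.mp hm
  simpa [Finsupp.weight_single] using le_weightedTotalDegree w hm'

theorem weightedTotalDegree_pderiv_add_le {i : σ} {q : MvPolynomial σ R} (hq : pderiv i q ≠ 0) :
    weightedTotalDegree w (pderiv i q) + w i ≤ weightedTotalDegree w q := by
  have hbound :
      ∀ m ∈ (pderiv i q).support, Finsupp.weight w m + w i ≤ weightedTotalDegree w q := by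
    intro m hm
    have hcoeff : coeff (m + Finsupp.single i 1) q ≠ 0 := by
      intro h0
      rw [mem_support_iff, coeff_pderiv, h0, zero_mul] at hm
      exact hm rfl
    simpa [Finsupp.weight_single] using le_weightedTotalDegree w (mem_support_iff.mpr hcoeff)
  obtain ⟨m, hm, hmax⟩ := Finset.exists_mem_eq_sup _ (support_nonempty.mpr hq) (Finsupp.weight w)
  rw [weightedTotalDegree, hmax]
  exact hbound m hm

end MvPolynomial

namespace Multiset

variable {R : Type*} [CommSemiring R]

theorem esymm_zero (s : Multiset R) : s.esymm 0 = 1 := by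
  simp [esymm, powersetCard_zero_left]

theorem esymm_eq_zero_of_card_lt {s : Multiset R} {k : ℕ} (h : card s < k) : s.esymm k = 0 := by
  simp [esymm, powersetCard_eq_empty k h]

theorem esymm_cons_succ (a : R) (s : Multiset R) (k : ℕ) :
    (a ::ₘ s).esymm (k + 1) = s.esymm (k + 1) + a * s.esymm k := by
  simp [esymm, powersetCard_cons, map_map, sum_map_mul_left]

end Multiset

theorem Finset.sum_smul_sum_linearMap_comm {ι κ R M N : Type*} [CommSemiring R]
    [AddCommMonoid M] [AddCommMonoid N] [Module R M] [Module R N] (s : Finset ι) (D : Finset κ)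
    (c : ι → R) (f : κ → M →ₗ[R] N) (g : κ → ι → M) :
    ∑ i ∈ s, c i • ∑ d ∈ D, f d (g d i) = ∑ d ∈ D, f d (∑ i ∈ s, c i • g d i) := by
  simp only [Finset.smul_sum, map_sum, map_smul]
  exact Finset.sum_comm

section Operators

variable {n : ℕ}

theorem J_add (k : ℤ) (a b : PP n) : J n k (a + b) = J n k a + J n k b := by
  unfold J
  split_ifs <;> simp [mul_add]

theorem J_C_mul (k : ℤ) (c : RR n) (a : PP n) : J n k (C c * a) = C c * J n k a := by
  unfold J
  split_ifs <;> simp [mul_left_comm]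

def stepOp (uvec : ℕ → RR n) (u : ℕ) (h d : ℤ) : PP n →ₗ[RR n] PP n where
  toFun := if d = 0 then (fun p => C (uvec u - hb n * bb n * (h : RR n)) * p) else J n (-d)
  map_add' a b := by split_ifs <;> simp [mul_add, J_add]
  map_smul' c a := by split_ifs <;> simp [smul_eq_C_mul, mul_left_comm, J_C_mul]

theorem stepOp_apply_of_pos (uvec : ℕ → RR n) (u : ℕ) (h : ℤ) {d : ℤ} (hd : 0 < d) (q : PP n) :
    stepOp uvec u h d q = hb n • (X d.toNat * q) := by
  simp [stepOp, J, hd.ne', hd.not_gt, hd, smul_eq_C_mul, mul_assoc]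

theorem stepOp_apply_of_neg (uvec : ℕ → RR n) (u : ℕ) (h : ℤ) {d : ℤ} (hd : d < 0) (q : PP n) :
    stepOp uvec u h d q = (hb n * ((-d).toNat : RR n)) • pderiv (-d).toNat q := by
  simp [stepOp, J, hd.ne, hd, smul_eq_C_mul, mul_assoc]

theorem stepOp_zero_apply (uvec : ℕ → RR n) (u : ℕ) (h : ℤ) (p : PP n) :
    stepOp uvec u h 0 p = (uvec u - hb n * bb n * (h : RR n)) • p := by
  simp [stepOp, smul_eq_C_mul]

theorem stepOp_of_ne_zero (uvec uvec' : ℕ → RR n) (u u' : ℕ) (h : ℤ) {d : ℤ} (hd : d ≠ 0) :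
    stepOp uvec u h d = stepOp uvec' u' h d := by
  ext1 p
  simp [stepOp, hd]

theorem sum_stepOp_eq_add (uvec uvec' : ℕ → RR n) (u u' : ℕ) (h : ℤ) {D : Finset ℤ}
    (hD : 0 ∈ D) (x : ℤ → PP n) :
    ∑ d ∈ D, stepOp uvec u h d (x d)
      = ∑ d ∈ D, stepOp uvec' u' h d (x d) + (uvec u - uvec' u') • x 0 := by
  rw [← Finset.add_sum_erase _ _ hD, ← Finset.add_sum_erase _ _ hD,
    Finset.sum_congr rfl fun d hd => by
      rw [stepOp_of_ne_zero uvec uvec' u u' h (Finset.ne_of_mem_erase hd)],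
    stepOp_zero_apply, stepOp_zero_apply]
  module

theorem weightedTotalDegree_stepOp_le (uvec : ℕ → RR n) (u : ℕ) (h d : ℤ) {q : PP n}
    (hq : stepOp uvec u h d q ≠ 0) :
    (wdeg (stepOp uvec u h d q) : ℤ) ≤ wdeg q + d := by
  rcases lt_trichotomy d 0 with hd | rfl | hd
  · rw [stepOp_apply_of_neg uvec u h hd] at hq ⊢
    have hpderiv : pderiv (-d).toNat q ≠ 0 := fun h0 => hq (by rw [h0, smul_zero])
    have := weightedTotalDegree_pderiv_add_le id hpderiv
    have := weightedTotalDegree_smul_le id (hb n * ((-d).toNat : RR n)) (pderiv (-d).toNat q)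
    simp only [id] at *
    omega
  · rw [stepOp_zero_apply]
    have := weightedTotalDegree_smul_le id (uvec u - hb n * bb n * (h : RR n)) q
    omega
  · rw [stepOp_apply_of_pos uvec u h hd]
    have := weightedTotalDegree_X_mul_le id d.toNat q
    have := weightedTotalDegree_smul_le id (hb n) (X d.toNat * q)
    simp only [id] at *
    omega

theorem wtT_cons_apply (uvec : ℕ → RR n) (u : ℕ) (h d : ℤ) (L : List ℤ) (p : PP n) :
    wtT n uvec u h (d :: L) p = stepOp uvec u h d (wtT n uvec (u + 1) (h + d) L p) := rfl

theorem wtT_apply_zero (uvec : ℕ → RR n) (L : List ℤ) (u : ℕ) (h : ℤ) :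
    wtT n uvec u h L 0 = 0 := by
  induction L generalizing u h with
  | nil => rfl
  | cons d L ih => rw [wtT_cons_apply, ih, map_zero]

theorem wtT_append_apply (uvec : ℕ → RR n) (L₁ L₂ : List ℤ) (u : ℕ) (h : ℤ) (p : PP n) :
    wtT n uvec u h (L₁ ++ L₂) p
      = wtT n uvec u h L₁ (wtT n uvec (u + L₁.length) (h + L₁.sum) L₂ p) := by
  induction L₁ generalizing u h with
  | nil => simp [wtT]
  | cons d L ih => simp [wtT_cons_apply, ih, add_assoc, add_comm 1]

theorem wtT_const_vec (c : RR n) (L : List ℤ) (u u' : ℕ) (h : ℤ) :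
    wtT n (fun _ => c) u h L = wtT n (fun _ => c) u' h L := by
  induction L generalizing u u' h with
  | nil => rfl
  | cons d L ih =>
    ext1 p
    rw [wtT_cons_apply, wtT_cons_apply, ih (u + 1) (u' + 1)]
    rcases eq_or_ne d 0 with rfl | hd
    · simp [stepOp_zero_apply]
    · rw [stepOp_of_ne_zero _ (fun _ => c) u u' h hd]

theorem weightedTotalDegree_wtT_le (uvec : ℕ → RR n) (L : List ℤ) (u : ℕ) (h : ℤ) {p : PP n}
    (hp : wtT n uvec u h L p ≠ 0) :
    (wdeg (wtT n uvec u h L p) : ℤ) ≤ wdeg p + L.sum := by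
  induction L generalizing u h with
  | nil => simp [wtT]
  | cons d L ih =>
    rw [wtT_cons_apply] at hp ⊢
    have hinner : wtT n uvec (u + 1) (h + d) L p ≠ 0 := fun h0 => hp (by rw [h0, map_zero])
    have := weightedTotalDegree_stepOp_le uvec u h d hp
    have := ih (u + 1) (h + d) hinner
    simp only [List.sum_cons]
    omega

theorem height_le_of_wtT_ne_zero (uvec : ℕ → RR n) (L : List ℤ) (u : ℕ) (h : ℤ) {p : PP n}
    (hp : wtT n uvec u h L p ≠ 0) (j : ℕ) :
    h + (L.take j).sum ≤ wdeg p + (h + L.sum) := by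
  rw [← List.take_append_drop j L, wtT_append_apply] at hp
  have hinner : wtT n uvec (u + (L.take j).length) (h + (L.take j).sum) (L.drop j) p ≠ 0 :=
    fun h0 => hp (by rw [h0, wtT_apply_zero])
  have := weightedTotalDegree_wtT_le uvec _ _ _ hinner
  have := List.sum_take_add_sum_drop L j
  omega

def stepRange (p : PP n) : Finset ℤ :=
  Finset.Icc (-((wdeg p : ℤ) + 1)) ((wdeg p : ℤ) + 1)

theorem zero_mem_stepRange (p : PP n) : (0 : ℤ) ∈ stepRange p := by
  simp only [stepRange, Finset.mem_Icc]
  omega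

end Operators

theorem List.mem_Icc_of_partial_sums_mem_Icc {a b h : ℤ} {L : List ℤ}
    (hL : ∀ j ≤ L.length, h + (L.take j).sum ∈ Set.Icc a b) :
    ∀ d ∈ L, d ∈ Set.Icc (a - b) (b - a) := by
  induction L generalizing h with
  | nil => simp
  | cons d L ih =>
    have h0 := hL 0 (by simp)
    have h1 := hL 1 (by simp)
    simp only [List.take_zero, List.sum_nil, add_zero, List.take_succ_cons, List.sum_cons,
      Set.mem_Icc] at h0 h1
    refine List.forall_mem_cons.mpr
      ⟨by simp only [Set.mem_Icc]; omega, ih (h := h + d) fun j hj => ?_⟩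
    simpa [add_assoc] using hL (j + 1) (by simpa using hj)

theorem mem_bridgeSet_natCast {h y' : ℤ} {N : ℕ} {L : List ℤ} :
    L ∈ BridgeSet h N y' ↔
      L.length = N ∧ h + L.sum = y' ∧ ∀ j : ℕ, 0 < j → j < N → 0 ≤ h + (L.take j).sum := by
  simp [BridgeSet, PathSet, and_assoc]

theorem cons_mem_bridgeSet_succ {h d : ℤ} {N : ℕ} {L : List ℤ} :
    d :: L ∈ BridgeSet h (N + 1 : ℕ) 0 ↔ 0 ≤ h + d ∧ L ∈ BridgeSet (h + d) N 0 := by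
  simp only [mem_bridgeSet_natCast, List.length_cons, List.sum_cons, add_left_inj]
  have htake (j : ℕ) : (List.take (j + 1) (d :: L)).sum = d + (L.take j).sum := by simp
  constructor
  · rintro ⟨hlen, hsum, hpos⟩
    refine ⟨?_, hlen, by omega, fun j hj hjN => ?_⟩
    · rcases Nat.eq_zero_or_pos N with rfl | hN
      · simp [List.length_eq_zero_iff.mp hlen] at hsum; omega
      · simpa using hpos 1 one_pos (by omega)
    · have := hpos (j + 1) (by omega) (by omega)
      rw [htake] at this
      omega
  · rintro ⟨hd, hlen, hsum, hpos⟩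
    refine ⟨hlen, by omega, fun j hj hjN => ?_⟩
    obtain ⟨j, rfl⟩ := Nat.exists_eq_add_of_lt hj
    rw [zero_add, htake]
    rcases Nat.eq_zero_or_pos j with rfl | hj'
    · simpa using hd
    · have := hpos j hj' (by omega)
      omega

def boundedLists (B : ℤ) : ℕ → Finset (List ℤ)
  | 0 => {[]}
  | N + 1 => (Finset.Icc (-B) B ×ˢ boundedLists B N).image fun x => x.1 :: x.2

theorem mem_boundedLists {B : ℤ} {N : ℕ} {L : List ℤ} :
    L ∈ boundedLists B N ↔ L.length = N ∧ ∀ d ∈ L, d ∈ Set.Icc (-B) B := by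
  induction N generalizing L with
  | zero => simp +contextual [boundedLists, List.length_eq_zero_iff]
  | succ N ih =>
    cases L with
    | nil => simp [boundedLists]
    | cons d L => simp only [boundedLists, Finset.mem_image, Finset.mem_product]; aesop

section Bridges

variable {n : ℕ} (uvec : ℕ → RR n) (u : ℕ)

theorem mem_boundedLists_of_wtT_ne_zero {h : ℤ} {N : ℕ} {L : List ℤ} {p : PP n} (hh : -1 ≤ h)
    (hL : L ∈ BridgeSet h N 0) (hp : wtT n uvec u h L p ≠ 0) :
    L ∈ boundedLists (wdeg p + 1) N := by
  obtain ⟨hlen, hsum, hpos⟩ := mem_bridgeSet_natCast.mp hL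
  refine mem_boundedLists.mpr ⟨hlen, fun d hd => ?_⟩
  have hheights : ∀ j ≤ L.length, h + (L.take j).sum ∈ Set.Icc (-1) (wdeg p : ℤ) := by
    intro j hj
    have := height_le_of_wtT_ne_zero uvec L u h hp j
    refine ⟨?_, by omega⟩
    rcases Nat.eq_zero_or_pos j with rfl | hj0
    · simpa using hh
    rcases hj.lt_or_eq with hjN | rfl
    · have := hpos j hj0 (hlen ▸ hjN)
      omega
    · rw [List.take_length]
      omega
  have := List.mem_Icc_of_partial_sums_mem_Icc hheights d hd
  simp only [Set.mem_Icc] at this ⊢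
  omega

theorem finite_bridgeSet_wtT_ne_zero {h : ℤ} (hh : -1 ≤ h) (N : ℕ) (p : PP n) :
    {L ∈ BridgeSet h N 0 | wtT n uvec u h L p ≠ 0}.Finite :=
  (boundedLists (wdeg p + 1) N).finite_toSet.subset fun _ hL =>
    mem_boundedLists_of_wtT_ne_zero uvec u hh hL.1 hL.2

def bridgeSum (h : ℤ) (N : ℕ) (p : PP n) : PP n :=
  ∑ᶠ L ∈ BridgeSet h N 0, wtT n uvec u h L p

/-- The sum over paths of length `N` from height `h` to `0` all of whose heights are nonnegative. -/
def nonnegSum (h : ℤ) (N : ℕ) (p : PP n) : PP n :=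
  if 0 ≤ h then bridgeSum uvec u h N p else 0

theorem bridgeSum_eq_sum_boundedLists {h : ℤ} (hh : -1 ≤ h) (N : ℕ) (p : PP n) :
    bridgeSum uvec u h N p
      = ∑ L ∈ boundedLists (wdeg p + 1) N,
          (BridgeSet h N 0).indicator (fun L => wtT n uvec u h L p) L := by
  rw [bridgeSum, finsum_mem_def]
  refine finsum_eq_sum_of_support_subset _ fun L hL => ?_
  have hmem : L ∈ BridgeSet h N 0 := by
    by_contra hc
    exact hL (Set.indicator_of_notMem hc _)
  rw [Function.mem_support, Set.indicator_of_mem hmem] at hL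
  exact mem_boundedLists_of_wtT_ne_zero uvec u hh hmem hL

theorem bridgeSum_succ {h : ℤ} (hh : -1 ≤ h) (N : ℕ) (p : PP n) :
    bridgeSum uvec u h (N + 1) p
      = ∑ d ∈ stepRange p, stepOp uvec u h d (nonnegSum uvec (u + 1) (h + d) N p) := by
  have hcons : Set.InjOn (fun x : ℤ × List ℤ => x.1 :: x.2) Set.univ := fun x _ y _ hxy =>
    Prod.ext (List.cons_eq_cons.mp hxy).1 (List.cons_eq_cons.mp hxy).2
  rw [bridgeSum_eq_sum_boundedLists uvec u hh, boundedLists,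
    Finset.sum_image (hcons.mono (Set.subset_univ _)), Finset.sum_product]
  refine Finset.sum_congr rfl fun d _ => ?_
  rw [nonnegSum]
  split_ifs with hd
  · rw [bridgeSum_eq_sum_boundedLists uvec (u + 1) (by omega), map_sum]
    refine Finset.sum_congr rfl fun L _ => ?_
    by_cases hL : L ∈ BridgeSet (h + d) N 0
    · rw [Set.indicator_of_mem hL, Set.indicator_of_mem (cons_mem_bridgeSet_succ.mpr ⟨hd, hL⟩),
        wtT_cons_apply]
    · rw [Set.indicator_of_notMem hL, map_zero,
        Set.indicator_of_notMem fun h' => hL (cons_mem_bridgeSet_succ.mp h').2]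
  · rw [map_zero]
    exact Finset.sum_eq_zero fun L _ =>
      Set.indicator_of_notMem (fun h' => hd (cons_mem_bridgeSet_succ.mp h').1) _

theorem nonnegSum_succ {h : ℤ} (hh : 0 ≤ h) (N : ℕ) (p : PP n) :
    nonnegSum uvec u h (N + 1) p
      = ∑ d ∈ stepRange p, stepOp uvec u h d (nonnegSum uvec (u + 1) (h + d) N p) := by
  rw [nonnegSum, if_pos hh, bridgeSum_succ uvec u (by omega)]

theorem nonnegSum_length_zero (uvec' : ℕ → RR n) (u' : ℕ) (h : ℤ) (p : PP n) :
    nonnegSum uvec u h 0 p = nonnegSum uvec' u' h 0 p := by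
  unfold nonnegSum bridgeSum
  refine if_congr Iff.rfl (finsum_mem_congr rfl fun L hL => ?_) rfl
  rw [List.length_eq_zero_iff.mp (mem_bridgeSet_natCast.mp hL).1]
  rfl

theorem nonnegSum_const_vec (c : RR n) (u₁ u₂ : ℕ) (h : ℤ) (N : ℕ) :
    nonnegSum (fun _ => c) u₁ h N = nonnegSum (fun _ => c) u₂ h N := by
  unfold nonnegSum bridgeSum
  simp_rw [wtT_const_vec c _ u₁ u₂]

end Bridges

def flatWeights {R : Type*} (uvec : ℕ → R) (u m : ℕ) : Multiset R :=
  (List.range' u m).map uvec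

theorem flatWeights_succ {R : Type*} (uvec : ℕ → R) (u m : ℕ) :
    flatWeights uvec u (m + 1) = uvec u ::ₘ flatWeights uvec (u + 1) m := by
  simp [flatWeights, List.range'_succ]

theorem card_flatWeights {R : Type*} (uvec : ℕ → R) (u m : ℕ) :
    Multiset.card (flatWeights uvec u m) = m := by
  simp [flatWeights]

open Finset Finset.Nat in
theorem sum_antidiagonal_esymm_smul_nonnegSum {n : ℕ} (uvec : ℕ → RR n) (m u : ℕ) (h : ℤ)
    (p : PP n) :
    ∑ x ∈ antidiagonal m,
        (flatWeights uvec u m).esymm x.2 • nonnegSum (fun _ => 0) u h x.1 p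
      = nonnegSum uvec u h m p := by
  induction m generalizing u h with
  | zero => simp [Multiset.esymm_zero, nonnegSum_length_zero _ _ uvec u]
  | succ m ih =>
    by_cases hh : 0 ≤ h
    swap
    · simp [nonnegSum, hh]
    set w := flatWeights uvec (u + 1) m
    set A := fun i => nonnegSum (fun _ => (0 : RR n)) u h i p
    have hpascal : ∑ x ∈ antidiagonal (m + 1), (uvec u ::ₘ w).esymm x.2 • A x.1
        = ∑ x ∈ antidiagonal (m + 1), w.esymm x.2 • A x.1
          + uvec u • ∑ x ∈ antidiagonal m, w.esymm x.2 • A x.1 := by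
      simp only [sum_antidiagonal_succ', Multiset.esymm_zero, Multiset.esymm_cons_succ,
        add_smul, mul_smul, Finset.smul_sum, Finset.sum_add_distrib]
      abel
    have hshift : ∑ x ∈ antidiagonal (m + 1), w.esymm x.2 • A x.1
        = ∑ x ∈ antidiagonal m, w.esymm x.2 • A (x.1 + 1) := by
      rw [sum_antidiagonal_succ,
        Multiset.esymm_eq_zero_of_card_lt (by simp [w, card_flatWeights]), zero_smul, zero_add]
    have hstep : ∑ x ∈ antidiagonal m, w.esymm x.2 • A (x.1 + 1)
        = ∑ d ∈ stepRange p, stepOp (fun _ => 0) u h d (nonnegSum uvec (u + 1) (h + d) m p) := by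
      simp only [A, nonnegSum_succ _ _ hh, Finset.sum_smul_sum_linearMap_comm]
      refine Finset.sum_congr rfl fun d _ => ?_
      rw [← ih (u + 1) (h + d)]
    have hflat : ∑ x ∈ antidiagonal m, w.esymm x.2 • A x.1 = nonnegSum uvec (u + 1) h m p := by
      rw [← ih (u + 1) h]
      simp_rw [A, w, nonnegSum_const_vec (0 : RR n) (u + 1) u]
    rw [flatWeights_succ, hpascal, hshift, hstep, hflat, nonnegSum_succ _ _ hh,
      sum_stepOp_eq_add uvec (fun _ => 0) u u h (zero_mem_stepRange p), sub_zero, add_zero]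

theorem esymP_eq_esymm_flatWeights (n s : ℕ) :
    esymP n s = (flatWeights (uvP n) 2 n).esymm s := by
  rw [esymP, ← Finset.esymm_map_val, Fin.univ_val_map, flatWeights]
  congr 2
  refine List.ext_getElem (by simp) fun i h₁ h₂ => ?_
  simp at h₁
  simp [uvP, show ¬ n + 1 < 2 + i by omega]

theorem uvP_one (n : ℕ) : uvP n 1 = 0 := by
  simp [uvP]

/-- **Theorem (P-part of the path identity, used for Theorem 2.5 of the paper).**
For `R = ℚ[ℏ,𝔟,P_1,…,P_n]`, the identity of `R`-linear operators on `R[p̃]`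
`Σ_{i=0}^{n} e_{n−i}(P) · Σ_{γ ∈ Γ^{≥0}_{(0,−1)→(i+1,0)}} wt̃(γ|0)
  = Σ_{γ ∈ Γ^{≥0}_{(0,−1)→(n+1,0)}} wt̃(γ|(0,P_1,…,P_n))`
holds, and every sum over a bridge set is locally finite. -/
theorem stmt1 (n : ℕ) :
    (∀ p : PP n, ∀ i : ℕ, i ≤ n →
        {L ∈ BridgeSet (-1) (i + 1) 0 | wtT n (fun _ => 0) 1 (-1) L p ≠ 0}.Finite) ∧
    (∀ p : PP n,
        {L ∈ BridgeSet (-1) (n + 1) 0 | wtT n (uvP n) 1 (-1) L p ≠ 0}.Finite) ∧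
    (∀ p : PP n,
        ∑ i ∈ Finset.range (n + 1),
            C (esymP n (n - i)) *
              ∑ᶠ L ∈ BridgeSet (-1) (i + 1) 0, wtT n (fun _ => 0) 1 (-1) L p
          = ∑ᶠ L ∈ BridgeSet (-1) (n + 1) 0, wtT n (uvP n) 1 (-1) L p) := by
  refine ⟨fun p i _ => by exact_mod_cast finite_bridgeSet_wtT_ne_zero _ 1 le_rfl (i + 1) p,
    fun p => by exact_mod_cast finite_bridgeSet_wtT_ne_zero _ 1 le_rfl (n + 1) p, fun p => ?_⟩
  have hbridge (uvec : ℕ → RR n) (N : ℕ) :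
      ∑ᶠ L ∈ BridgeSet (-1) (N + 1) 0, wtT n uvec 1 (-1) L p
        = ∑ d ∈ stepRange p, stepOp uvec 1 (-1) d (nonnegSum uvec 2 (-1 + d) N p) := by
    exact_mod_cast bridgeSum_succ uvec 1 le_rfl N p
  simp only [hbridge, esymP_eq_esymm_flatWeights, ← smul_eq_C_mul]
  rw [← Finset.Nat.sum_antidiagonal_eq_sum_range_succ
      (fun i j => (flatWeights (uvP n) 2 n).esymm j • _), Finset.sum_smul_sum_linearMap_comm]
  simp_rw [sum_antidiagonal_esymm_smul_nonnegSum]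
  rw [sum_stepOp_eq_add (uvP n) (fun _ => 0) 1 1 (-1) (zero_mem_stepRange p), uvP_one, sub_zero,
    zero_smul, add_zero]

end Stmt1
end
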